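/- Let L = −∂_η² − (η/2)∂_η − 1 act on smooth functions on ℝ₊, and define φ₀(η) = η e^{−η²/4} and φ_{k+1} = φ_k'' for k ≥ 0. Then L φ_k = k φ_k for every k ≥ 0. -/

import Mathlib

/-!
Differentiating `L f = c f` gives `L f' = (c + 1/2) f'`, because `∂` and
`L = -∂² - (η/2)∂ - 1` satisfy `[L, ∂] = ∂/2`. The Gaussian `e^{-η²/4}` solves
`L g = -g/2`, and `φ₀ = -2 g'`, so `L φ₀ = 0`; each `φ_{k+1} = φ_k''` raises the
eigenvalue by `1`.
-/

/-- The eigenfunctions `φ_k`: `φ₀(η) = η e^{-η²/4}`, `φ_{k+1} = φ_k''`. -/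
noncomputable def phiFun : ℕ → (ℝ → ℝ)
  | 0 => fun η => η * Real.exp (-η ^ 2 / 4)
  | k + 1 => deriv (deriv (phiFun k))

open Real

noncomputable def opL (f : ℝ → ℝ) (η : ℝ) : ℝ :=
  -deriv (deriv f) η - η / 2 * deriv f η - f η

theorem hasDerivAt_neg_half (x : ℝ) : HasDerivAt (fun η : ℝ => -(η / 2)) (-(1 / 2)) x :=
  ((hasDerivAt_id' x).div_const 2).neg

structure IsOpLEigenfunction (c : ℝ) (f : ℝ → ℝ) : Prop where
  differentiable : Differentiable ℝ f
  differentiable_deriv : Differentiable ℝ (deriv f)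
  opL_eq : ∀ η, opL f η = c * f η

namespace IsOpLEigenfunction

variable {c : ℝ} {f : ℝ → ℝ}

theorem deriv_deriv_eq (h : IsOpLEigenfunction c f) :
    deriv (deriv f) = fun η => -(η / 2) * deriv f η - (c + 1) * f η := by
  funext η
  have := h.opL_eq η
  unfold opL at this
  linarith

protected theorem deriv (h : IsOpLEigenfunction c f) :
    IsOpLEigenfunction (c + 1 / 2) (deriv f) where
  differentiable := h.differentiable_deriv
  differentiable_deriv := by
    have := h.differentiable
    have := h.differentiable_deriv
    rw [h.deriv_deriv_eq]
    fun_prop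
  opL_eq η := by
    have hf := (h.differentiable η).hasDerivAt
    have hf' := (h.differentiable_deriv η).hasDerivAt
    have hd : HasDerivAt (fun x => -(x / 2) * deriv f x - (c + 1) * f x)
        (-(1 / 2) * deriv f η + -(η / 2) * deriv (deriv f) η - (c + 1) * deriv f η) η :=
      ((hasDerivAt_neg_half η).mul hf').sub (hf.const_mul (c + 1))
    rw [← h.deriv_deriv_eq] at hd
    simp only [opL, hd.deriv]
    ring

theorem deriv_deriv (h : IsOpLEigenfunction c f) :
    IsOpLEigenfunction (c + 1) (deriv (deriv f)) := by
  convert h.deriv.deriv using 1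
  ring

theorem const_mul (h : IsOpLEigenfunction c f) (a : ℝ) :
    IsOpLEigenfunction c (fun η => a * f η) where
  differentiable := h.differentiable.const_mul a
  differentiable_deriv := by
    rw [deriv_const_mul_field']
    exact h.differentiable_deriv.const_mul a
  opL_eq η := by
    simp only [opL, deriv_const_mul_field']
    have := h.opL_eq η
    unfold opL at this
    linear_combination a * this

end IsOpLEigenfunction

theorem hasDerivAt_gaussian (x : ℝ) :
    HasDerivAt (fun η => exp (-η ^ 2 / 4)) (-(x / 2) * exp (-x ^ 2 / 4)) x := by
  have hexponent : HasDerivAt (fun η : ℝ => -η ^ 2 / 4) (-(x / 2)) x := by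
    refine (((hasDerivAt_pow 2 x).neg).div_const 4).congr_deriv ?_
    push_cast
    ring
  refine hexponent.exp.congr_deriv ?_
  ring

theorem deriv_gaussian :
    deriv (fun η => exp (-η ^ 2 / 4)) = fun x => -(x / 2) * exp (-x ^ 2 / 4) :=
  funext fun x => (hasDerivAt_gaussian x).deriv

theorem isOpLEigenfunction_gaussian :
    IsOpLEigenfunction (-1 / 2) (fun η => exp (-η ^ 2 / 4)) where
  differentiable := by fun_prop
  differentiable_deriv := by
    rw [deriv_gaussian]
    fun_prop
  opL_eq η := by
    have hd : HasDerivAt (fun x => -(x / 2) * exp (-x ^ 2 / 4))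
        (-(1 / 2) * exp (-η ^ 2 / 4) - η / 2 * (-(η / 2) * exp (-η ^ 2 / 4))) η := by
      refine ((hasDerivAt_neg_half η).mul (hasDerivAt_gaussian η)).congr_deriv ?_
      ring
    simp only [opL, deriv_gaussian, hd.deriv]
    ring

theorem phiFun_zero_eq : phiFun 0 = fun η => -2 * deriv (fun η => exp (-η ^ 2 / 4)) η := by
  funext η
  simp only [phiFun, deriv_gaussian]
  ring

theorem isOpLEigenfunction_phiFun (k : ℕ) : IsOpLEigenfunction k (phiFun k) := by
  induction k with
  | zero =>
    rw [phiFun_zero_eq]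
    convert (isOpLEigenfunction_gaussian.deriv).const_mul (-2) using 1
    norm_num
  | succ k ih =>
    push_cast
    exact ih.deriv_deriv

theorem L_phi_eq (k : ℕ) (η : ℝ) :
    -(deriv (deriv (phiFun k)) η) - η / 2 * deriv (phiFun k) η - phiFun k η
      = k * phiFun k η :=
  (isOpLEigenfunction_phiFun k).opL_eq η
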